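/- Let σ be an acyclic cycle signature and σ* an acyclic cocycle signature of a connected finite graph G, and let O⃗ be an orientation. Then there exists a unique (σ,σ*)-compatible orientation O⃗^cp in the cycle-cocycle reversal class of O⃗, and moreover O⃗ is obtained from O⃗^cp by reversing a collection of pairwise edge-disjoint directed cycles and directed cocycles contained in O⃗^cp. -/

import Mathlib

open Function

namespace GB

structure Graph where
  V : Type
  E : Type
  [fV : Fintype V]
  [fE : Fintype E]
  [dV : DecidableEq V]
  [dE : DecidableEq E]
  tail : E → V
  head : E → V

attribute [instance] Graph.fV Graph.fE Graph.dV Graph.dE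

variable (G : Graph)

/-- Incidence matrix with respect to the reference orientation. -/
def incMat : Matrix G.V G.E ℝ := fun v e =>
  (if G.head e = v then 1 else 0) - (if G.tail e = v then 1 else 0)

/-- The incidence linear map. -/
noncomputable def DMap : (G.E → ℝ) →ₗ[ℝ] (G.V → ℝ) := (incMat G).mulVecLin

/-- Cycle space: kernel of the incidence matrix (equal to ker of D with a row removed). -/
noncomputable def cycleSpace : Submodule ℝ (G.E → ℝ) := LinearMap.ker (DMap G)

/-- Cocycle space: row space of the incidence matrix (= im(D^T) for connected G). -/
noncomputable def cocycleSpace : Submodule ℝ (G.E → ℝ) :=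
  LinearMap.range ((incMat G).transpose.mulVecLin)

def Connected : Prop :=
  ∀ f : G.V → ℝ, (∀ e, f (G.head e) = f (G.tail e)) → ∀ v w, f v = f w

/-- a {0,±1}-vector -/
def IsZPM (x : G.E → ℝ) : Prop := ∀ e, x e = 0 ∨ x e = 1 ∨ x e = -1

/-- A directed cycle, identified with a support-minimal nonzero {0,±1}-vector of the
cycle space (a signed circuit of the graphic matroid). -/
def IsDirCycle (x : G.E → ℝ) : Prop :=
  x ∈ cycleSpace G ∧ x ≠ 0 ∧ IsZPM G x ∧
    ∀ y ∈ cycleSpace G, y ≠ 0 → support y ⊆ support x → support y = support x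

/-- A directed cocycle (signed cocircuit). -/
def IsDirCocycle (x : G.E → ℝ) : Prop :=
  x ∈ cocycleSpace G ∧ x ≠ 0 ∧ IsZPM G x ∧
    ∀ y ∈ cocycleSpace G, y ≠ 0 → support y ⊆ support x → support y = support x

def IsCycle (C : Set G.E) : Prop := ∃ x, IsDirCycle G x ∧ support x = C
def IsCocycle (C : Set G.E) : Prop := ∃ x, IsDirCocycle G x ∧ support x = C

/-- Orientations are identified with {0,1}-vectors, (1,…,1) being the reference orientation. -/
def IsOrientation (O : G.E → ℝ) : Prop := ∀ e, O e = 0 ∨ O e = 1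

/-- the ±1 direction of edge e in orientation O -/
def dir (O : G.E → ℝ) (e : G.E) : ℝ := 2 * O e - 1

/-- the signed vector x (e.g. a directed cycle or partial orientation) is contained in O -/
def InOrient (x O : G.E → ℝ) : Prop := ∀ e, x e = 0 ∨ x e = dir G O e

def IsIntVec (x : G.E → ℝ) : Prop := ∀ e, ∃ n : ℤ, x e = (n : ℝ)

/-- x is a sum of pairwise edge-disjoint directed cycles -/
def SumDisjDirCycles (x : G.E → ℝ) : Prop :=
  ∃ (n : ℕ) (c : Fin n → (G.E → ℝ)), (∀ i, IsDirCycle G (c i)) ∧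
    (∀ i j, i ≠ j → Disjoint (support (c i)) (support (c j))) ∧ x = ∑ i, c i

/-- x is a sum of pairwise edge-disjoint directed cocycles -/
def SumDisjDirCocycles (x : G.E → ℝ) : Prop :=
  ∃ (n : ℕ) (c : Fin n → (G.E → ℝ)), (∀ i, IsDirCocycle G (c i)) ∧
    (∀ i j, i ≠ j → Disjoint (support (c i)) (support (c j))) ∧ x = ∑ i, c i

/-- A cycle signature: a choice of direction for each cycle. -/
structure CycSig (G : Graph) where
  s : Set G.E → (G.E → ℝ)
  mem : ∀ C, IsCycle G C → IsDirCycle G (s C) ∧ support (s C) = C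

/-- A cocycle signature. -/
structure CocycSig (G : Graph) where
  s : Set G.E → (G.E → ℝ)
  mem : ∀ C, IsCocycle G C → IsDirCocycle G (s C) ∧ support (s C) = C

open Classical in
/-- σ is acyclic: no nontrivial nonnegative combination of the σ(C) vanishes. -/
noncomputable def AcyclicSig (σ : CycSig G) : Prop :=
  ∀ a : Set G.E → ℝ, (∀ C, 0 ≤ a C) →
    ∑ C ∈ Finset.univ.filter (fun C => IsCycle G C), a C • σ.s C = 0 →
    ∀ C, IsCycle G C → a C = 0

open Classical in
noncomputable def AcyclicCosig (σ : CocycSig G) : Prop :=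
  ∀ a : Set G.E → ℝ, (∀ C, 0 ≤ a C) →
    ∑ C ∈ Finset.univ.filter (fun C => IsCocycle G C), a C • σ.s C = 0 →
    ∀ C, IsCocycle G C → a C = 0

/-- O is σ-compatible: every directed cycle in O is the chosen one. -/
def SigCompatible (σ : CycSig G) (O : G.E → ℝ) : Prop :=
  ∀ x, IsDirCycle G x → InOrient G x O → x = σ.s (support x)

def CosigCompatible (σ : CocycSig G) (O : G.E → ℝ) : Prop :=
  ∀ x, IsDirCocycle G x → InOrient G x O → x = σ.s (support x)

def Compatible (σc : CycSig G) (σs : CocycSig G) (O : G.E → ℝ) : Prop :=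
  SigCompatible G σc O ∧ CosigCompatible G σs O

/-- one step of cycle reversal -/
def CycRev (O O' : G.E → ℝ) : Prop :=
  ∃ x, IsDirCycle G x ∧ InOrient G x O ∧ O' = O - x

/-- cycle reversal equivalence -/
def SameCycClass : (G.E → ℝ) → (G.E → ℝ) → Prop := Relation.EqvGen (CycRev G)

/-- one step of cycle or cocycle reversal -/
def CCRev (O O' : G.E → ℝ) : Prop :=
  ∃ x, (IsDirCycle G x ∨ IsDirCocycle G x) ∧ InOrient G x O ∧ O' = O - x

/-- cycle-cocycle reversal equivalence -/
def SameCCClass : (G.E → ℝ) → (G.E → ℝ) → Prop := Relation.EqvGen (CCRev G)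

/-- x is the directed fundamental cycle of e ∉ T, directed along the reference arc of e -/
def FundCycle (T : Finset G.E) (e : G.E) (x : G.E → ℝ) : Prop :=
  IsDirCycle G x ∧ x e = 1 ∧ support x ⊆ insert e (↑T : Set G.E)

/-- x is the directed fundamental cocycle of e ∈ T -/
def FundCocycle (T : Finset G.E) (e : G.E) (x : G.E → ℝ) : Prop :=
  IsDirCocycle G x ∧ x e = 1 ∧ support x ⊆ insert e ((↑T : Set G.E)ᶜ)

/-- T is a spanning tree: it contains no cycle and its complement contains no cocycle. -/
def IsSpanningTree (T : Finset G.E) : Prop :=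
  (∀ x, IsDirCycle G x → ¬ support x ⊆ (↑T : Set G.E)) ∧
  (∀ x, IsDirCocycle G x → ¬ support x ⊆ ((↑T : Set G.E)ᶜ))

/-- O = g_{σ,σ*}(T): each e ∉ T is oriented along σ(C(T,e)), each e ∈ T along σ*(C*(T,e)). -/
def GOrient (σc : CycSig G) (σs : CocycSig G) (T : Finset G.E) (O : G.E → ℝ) : Prop :=
  IsOrientation G O ∧
  (∀ e ∉ T, ∀ x, FundCycle G T e x → dir G O e = σc.s (support x) e) ∧
  (∀ e ∈ T, ∀ x, FundCocycle G T e x → dir G O e = σs.s (support x) e)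

/-- φ_{σ,σ*}(O) = S : O is obtained from the compatible orientation O^cp = g(T) by reversing
disjoint directed cycles c i and cocycles d j, and S = T ∪ (⊎ C_i) \ (⊎ C*_j). -/
def PhiRel (σc : CycSig G) (σs : CocycSig G) (O : G.E → ℝ) (S : Set G.E) : Prop :=
  ∃ (T : Finset G.E) (Ocp : G.E → ℝ) (n m : ℕ)
    (c : Fin n → (G.E → ℝ)) (d : Fin m → (G.E → ℝ)),
    IsSpanningTree G T ∧ Compatible G σc σs Ocp ∧ GOrient G σc σs T Ocp ∧
    (∀ i, IsDirCycle G (c i) ∧ InOrient G (c i) Ocp) ∧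
    (∀ j, IsDirCocycle G (d j) ∧ InOrient G (d j) Ocp) ∧
    (∀ i j, i ≠ j → Disjoint (support (c i)) (support (c j))) ∧
    (∀ i j, i ≠ j → Disjoint (support (d i)) (support (d j))) ∧
    (∀ i j, Disjoint (support (c i)) (support (d j))) ∧
    O = Ocp - (∑ i, c i) - (∑ j, d j) ∧
    S = ((↑T : Set G.E) ∪ (⋃ i, support (c i))) \ (⋃ j, support (d j))


/-- the cube of continuous orientations -/
def cube : Set (G.E → ℝ) := {x | ∀ e, 0 ≤ x e ∧ x e ≤ 1}

/-- x is a σ-compatible continuous orientation -/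
def ContSigCompat (σ : CycSig G) (x : G.E → ℝ) : Prop :=
  x ∈ cube G ∧ ∀ ε : ℝ, 0 < ε → ∀ C, IsCycle G C → x + ε • σ.s C ∉ cube G

/-- S̃_σ = S_σ + (im(D^T) ∩ ℤ^E) -/
def Stilde (σ : CycSig G) : Set (G.E → ℝ) :=
  {x | ∃ s, ContSigCompat G σ s ∧ ∃ v, v ∈ cocycleSpace G ∧ IsIntVec G v ∧ x = s + v}

end GB

/-!
Two orientations in one cycle-cocycle reversal class differ by an integral cycle vector plus an
integral cocycle vector. These are orthogonal and their sum is a {0,±1}-vector, so they have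
disjoint supports, and each is a sum of disjoint directed cycles (resp. cocycles) conformal to it:
conformal elementary vectors exist in any subspace, and in the cycle (resp. cocycle) space they
can be rounded to {0,±1}-vectors along closed walks (resp. threshold cuts). Two compatible
orientations cannot differ in this way, since each piece is a directed (co)cycle of one of them
whose reverse lies in the other, and the signature chooses both; this gives uniqueness and the
decomposition. For existence, keep reversing directed (co)cycles that disagree with the
signature. Each reversal adds a signature vector, so by acyclicity of σ and σ* (and since cycle
and cocycle spaces meet only in 0) no orientation recurs, and the process stops at a compatible
orientation because there are finitely many orientations.
-/

namespace GB

section Elementary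

variable {ι : Type*} {M : Submodule ℝ (ι → ℝ)} {w x y : ι → ℝ}

def IsElementary (M : Submodule ℝ (ι → ℝ)) (x : ι → ℝ) : Prop :=
  x ∈ M ∧ x ≠ 0 ∧ ∀ y ∈ M, y ≠ 0 → support y ⊆ support x → support y = support x

def Conformal (y x : ι → ℝ) : Prop := ∀ e, y e ≠ 0 → 0 < y e * x e

theorem Conformal.support_subset (h : Conformal y x) : support y ⊆ support x :=
  fun e he hx => (h e he).ne' (by rw [hx, mul_zero])

theorem Conformal.trans (hyx : Conformal y x) (hxw : Conformal x w) : Conformal y w := by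
  intro e he
  have hyx' := hyx e he
  have hxw' := hxw e (hyx.support_subset he)
  nlinarith [mul_pos hyx' hxw', sq_nonneg (x e)]

theorem IsElementary.neg (hx : IsElementary M x) : IsElementary M (-x) := by
  obtain ⟨hxM, hx0, hmin⟩ := hx
  refine ⟨M.neg_mem hxM, neg_ne_zero.mpr hx0, ?_⟩
  simpa only [support_neg] using hmin

theorem IsElementary.of_support_eq (hx : IsElementary M x) (hyM : y ∈ M) (hy0 : y ≠ 0)
    (h : support y = support x) : IsElementary M y :=
  ⟨hyM, hy0, fun z hzM hz0 hzy => (hx.2.2 z hzM hz0 (h ▸ hzy)).trans h.symm⟩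

theorem IsElementary.exists_eq_smul (hx : IsElementary M x) (hyM : y ∈ M)
    (h : support y ⊆ support x) : ∃ c : ℝ, y = c • x := by
  obtain ⟨e, he⟩ := Function.support_nonempty_iff.mpr hx.2.1
  refine ⟨y e / x e, by_contra fun hne => ?_⟩
  have hz0 : y - (y e / x e) • x ≠ 0 := sub_ne_zero.mpr hne
  have hsub : support (y - (y e / x e) • x) ⊆ support x :=
    (support_sub _ _).trans (Set.union_subset h (support_smul_subset_right _ _))
  have := (hx.2.2 _ (M.sub_mem hyM (M.smul_mem _ hx.1)) hz0 hsub).symm ▸ he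
  exact this (by simp [div_mul_cancel₀ _ (show x e ≠ 0 from he)])

theorem exists_isElementary_support_subset [Finite ι] (hw : w ∈ M) (hw0 : w ≠ 0) :
    ∃ m, IsElementary M m ∧ support m ⊆ support w := by
  obtain ⟨m, ⟨hmM, hm0, hmw⟩, hmin⟩ :=
    (measure fun y : ι → ℝ => (support y).ncard).wf.has_min
      {y | y ∈ M ∧ y ≠ 0 ∧ support y ⊆ support w} ⟨w, hw, hw0, subset_rfl⟩
  refine ⟨m, ⟨hmM, hm0, fun y hyM hy0 hym => ?_⟩, hmw⟩
  exact Set.eq_of_subset_of_ncard_le hym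
    (not_lt.mp (hmin y ⟨hyM, hy0, hym.trans hmw⟩)) (Set.toFinite _)

theorem exists_isElementary_pos_mul [Finite ι] (hw : w ∈ M) (hw0 : w ≠ 0) :
    ∃ m, IsElementary M m ∧ support m ⊆ support w ∧ ∃ e, 0 < m e * w e := by
  obtain ⟨m, hm, hmw⟩ := exists_isElementary_support_subset hw hw0
  obtain ⟨e, he⟩ := Function.support_nonempty_iff.mpr hm.2.1
  rcases (mul_ne_zero he (hmw he)).lt_or_gt with hneg | hpos
  · exact ⟨-m, hm.neg, by rwa [support_neg], e, by simpa using neg_pos.mpr hneg⟩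
  · exact ⟨m, hm, hmw, e, hpos⟩

theorem exists_conformal_sub_smul [Fintype ι] {m : ι → ℝ} (hmw : support m ⊆ support w)
    (hpos : ∃ e, 0 < m e * w e) :
    ∃ t : ℝ, 0 < t ∧ ∃ e, m e ≠ 0 ∧ (w - t • m) e = 0 ∧
      Conformal (w - t • m) w := by
  classical
  obtain ⟨e₀, he₀⟩ := hpos
  -- `t` is the largest scalar for which `w - t • m` is still conformal to `w`
  obtain ⟨e₁, he₁, ht⟩ := (Finset.univ.filter fun e => 0 < m e * w e).exists_min_image
    (fun e => w e / m e) ⟨e₀, by simpa using he₀⟩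
  rw [Finset.mem_filter] at he₁
  have hm₁ : m e₁ ≠ 0 := left_ne_zero_of_mul he₁.2.ne'
  set t := w e₁ / m e₁
  have ht_pos : 0 < t := by
    rw [show t = m e₁ * w e₁ / m e₁ ^ 2 by simp only [t]; field_simp]
    exact div_pos he₁.2 (by positivity)
  refine ⟨t, ht_pos, e₁, hm₁, by simp [t, div_mul_cancel₀ _ hm₁], fun e he => ?_⟩
  have hwe : w e ≠ 0 := by
    intro h0
    have hme : m e = 0 := notMem_support.mp fun hme => hmw hme h0
    exact he (by simp [h0, hme])
  refine lt_of_le_of_ne ?_ (mul_ne_zero he hwe).symm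
  have : (w - t • m) e * w e = w e ^ 2 - t * (m e * w e) := by
    simp only [Pi.sub_apply, Pi.smul_apply, smul_eq_mul]
    ring
  rw [this, sub_nonneg]
  by_cases hpos : 0 < m e * w e
  · calc t * (m e * w e) ≤ w e / m e * (m e * w e) :=
          mul_le_mul_of_nonneg_right (ht e (by simpa using hpos)) hpos.le
      _ = w e ^ 2 := by field_simp [left_ne_zero_of_mul hpos.ne']
  · nlinarith [sq_nonneg (w e)]

theorem exists_isElementary_conformal [Fintype ι] (hw : w ∈ M) (hw0 : w ≠ 0) :
    ∃ x, IsElementary M x ∧ Conformal x w := by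
  induction hn : (support w).ncard using Nat.strong_induction_on generalizing w with
  | _ n ih =>
  obtain ⟨m, hm, hmw, hpos⟩ := exists_isElementary_pos_mul hw hw0
  obtain ⟨t, ht, e₁, hm₁, hw'e₁, hw'w⟩ := exists_conformal_sub_smul hmw hpos
  by_cases hw'0 : w - t • m = 0
  · refine ⟨m, hm, fun e he => ?_⟩
    rw [sub_eq_zero.mp hw'0]
    simpa [mul_left_comm] using mul_pos ht (mul_self_pos.mpr he)
  · have hlt : (support (w - t • m)).ncard < n := hn ▸ Set.ncard_lt_ncard
      ((Set.ssubset_iff_of_subset hw'w.support_subset).mpr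
        ⟨e₁, hmw hm₁, fun h => h hw'e₁⟩) (Set.toFinite _)
    obtain ⟨x, hx, hxw'⟩ := ih _ hlt (M.sub_mem hw (M.smul_mem t hm.1)) hw'0 rfl
    exact ⟨x, hx, hxw'.trans hw'w⟩

end Elementary

section Restriction

variable {ι : Type*} {M : Submodule ℝ (ι → ℝ)} {w x y z : ι → ℝ}

def IsRestriction (y x : ι → ℝ) : Prop := ∀ e, y e ≠ 0 → y e = x e

theorem IsRestriction.support_subset (h : IsRestriction y x) : support y ⊆ support x :=
  fun e he => by rwa [mem_support, ← h e he]

theorem IsRestriction.trans (hyx : IsRestriction y x) (hxw : IsRestriction x w) :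
    IsRestriction y w :=
  fun e he => (hyx e he).trans (hxw e (hyx.support_subset he))

theorem IsRestriction.neg (h : IsRestriction y x) : IsRestriction (-y) (-x) :=
  fun e he => by simpa using h e (by simpa using he)

theorem IsRestriction.sub_left (h : IsRestriction y x) : IsRestriction (x - y) x := by
  intro e he
  have : y e = 0 := by_contra fun hy => he (by simp [h e hy])
  simp [this]

theorem IsRestriction.disjoint_sub (h : IsRestriction y x) :
    Disjoint (support y) (support (x - y)) :=
  Set.disjoint_left.mpr fun e hy hxy => hxy (by simp [h e hy])

theorem exists_sum_pairwise_disjoint [Finite ι] {P : (ι → ℝ) → Prop}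
    (hP : ∀ z ∈ M, z ≠ 0 → IsRestriction z w →
      ∃ y ∈ M, P y ∧ y ≠ 0 ∧ IsRestriction y z)
    (hw : w ∈ M) :
    ∃ (n : ℕ) (c : Fin n → ι → ℝ), (∀ i, P (c i) ∧ IsRestriction (c i) w) ∧
      (∀ i j, i ≠ j → Disjoint (support (c i)) (support (c j))) ∧ w = ∑ i, c i := by
  suffices ∀ z ∈ M, IsRestriction z w → ∃ (n : ℕ) (c : Fin n → ι → ℝ),
      (∀ i, P (c i) ∧ IsRestriction (c i) z) ∧
      (∀ i j, i ≠ j → Disjoint (support (c i)) (support (c j))) ∧ z = ∑ i, c i from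
    this w hw fun _ _ => rfl
  intro z hzM hzw
  induction hn : (support z).ncard using Nat.strong_induction_on generalizing z with
  | _ n ih =>
  by_cases hz0 : z = 0
  · exact ⟨0, Fin.elim0, fun i => i.elim0, fun i => i.elim0, by simp [hz0]⟩
  obtain ⟨y, hyM, hPy, hy0, hyz⟩ := hP z hzM hz0 hzw
  obtain ⟨e, he⟩ := Function.support_nonempty_iff.mpr hy0
  have hlt : (support (z - y)).ncard < n := hn ▸ Set.ncard_lt_ncard
    ((Set.ssubset_iff_of_subset hyz.sub_left.support_subset).mpr
      ⟨e, hyz.support_subset he, Set.disjoint_left.mp hyz.disjoint_sub he⟩) (Set.toFinite _)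
  obtain ⟨k, c, hc, hdisj, hsum⟩ :=
    ih _ hlt (z - y) (M.sub_mem hzM hyM) (hyz.sub_left.trans hzw) rfl
  have hyc (i : Fin k) : Disjoint (support y) (support (c i)) :=
    hyz.disjoint_sub.mono_right (hc i).2.support_subset
  refine ⟨k + 1, Fin.cons y c,
    Fin.cases ⟨hPy, hyz⟩ fun i => ⟨(hc i).1, (hc i).2.trans hyz.sub_left⟩, ?_, ?_⟩
  · intro i j hij
    cases i using Fin.cases <;> cases j using Fin.cases
    · exact absurd rfl hij
    · simpa using hyc _
    · simpa using (hyc _).symm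
    · simpa using hdisj _ _ fun h => hij (by rw [h])
  · rw [Fin.sum_cons, ← hsum, add_sub_cancel]

end Restriction

section Graph

variable {G : Graph} {w x y z b : G.E → ℝ}

open Matrix

theorem mem_cycleSpace_iff : x ∈ cycleSpace G ↔ ∀ v, ∑ e, incMat G v e * x e = 0 := by
  simp [cycleSpace, DMap, funext_iff, mulVec, dotProduct]

theorem incMat_transpose_mulVec_apply (f : G.V → ℝ) (e : G.E) :
    ((incMat G)ᵀ *ᵥ f) e = f (G.head e) - f (G.tail e) := by
  simp [mulVec, dotProduct, incMat, sub_mul, Finset.sum_sub_distrib]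

theorem dotProduct_eq_zero_of_mem_cycleSpace (hz : z ∈ cycleSpace G)
    (hb : b ∈ cocycleSpace G) : z ⬝ᵥ b = 0 := by
  obtain ⟨f, rfl⟩ := hb
  have hz : incMat G *ᵥ z = 0 := hz
  rw [mulVecLin_apply, dotProduct_mulVec, vecMul_transpose, hz, zero_dotProduct]

theorem eq_zero_of_mem_cycleSpace_of_mem_cocycleSpace (hz : z ∈ cycleSpace G)
    (hb : z ∈ cocycleSpace G) : z = 0 :=
  dotProduct_self_eq_zero.mp (dotProduct_eq_zero_of_mem_cycleSpace hz hb)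

theorem isDirCycle_iff : IsDirCycle G x ↔ IsElementary (cycleSpace G) x ∧ IsZPM G x :=
  ⟨fun ⟨h₁, h₂, h₃, h₄⟩ => ⟨⟨h₁, h₂, h₄⟩, h₃⟩,
    fun ⟨⟨h₁, h₂, h₄⟩, h₃⟩ => ⟨h₁, h₂, h₃, h₄⟩⟩

theorem isDirCocycle_iff : IsDirCocycle G x ↔ IsElementary (cocycleSpace G) x ∧ IsZPM G x :=
  ⟨fun ⟨h₁, h₂, h₃, h₄⟩ => ⟨⟨h₁, h₂, h₄⟩, h₃⟩,
    fun ⟨⟨h₁, h₂, h₄⟩, h₃⟩ => ⟨h₁, h₂, h₃, h₄⟩⟩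

theorem IsZPM.neg (hx : IsZPM G x) : IsZPM G (-x) := fun e => by
  rcases hx e with h | h | h <;> simp [h]

theorem IsZPM.mul_self_eq_one (hx : IsZPM G x) {e : G.E} (he : x e ≠ 0) : x e * x e = 1 := by
  rcases hx e with h | h | h <;> simp_all

theorem IsZPM.of_isRestriction (hx : IsZPM G x) (hyx : IsRestriction y x) : IsZPM G y :=
  fun e => (eq_or_ne (y e) 0).elim Or.inl fun hy => hyx e hy ▸ hx e

theorem IsZPM.isRestriction_of_conformal (hy : IsZPM G y) (hx : IsZPM G x)
    (h : Conformal y x) : IsRestriction y x := fun e he => by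
  have := h e he
  rcases hy e with h₁ | h₁ | h₁ <;> rcases hx e with h₂ | h₂ | h₂ <;> simp_all <;>
    linarith

theorem IsZPM.isIntVec (hx : IsZPM G x) : IsIntVec G x := fun e => by
  rcases hx e with h | h | h
  exacts [⟨0, by simp [h]⟩, ⟨1, by simp [h]⟩, ⟨-1, by simp [h]⟩]

theorem IsElementary.eq_or_eq_neg_of_support_eq {M : Submodule ℝ (G.E → ℝ)}
    (hx : IsElementary M x) (hxZ : IsZPM G x) (hyM : y ∈ M) (hyZ : IsZPM G y)
    (h : support y = support x) : y = x ∨ y = -x := by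
  obtain ⟨c, rfl⟩ := hx.exists_eq_smul hyM h.subset
  obtain ⟨e, he⟩ := Function.support_nonempty_iff.mpr hx.2.1
  have hce : c * x e ≠ 0 := by simpa [← h] using he
  have hcx := hyZ.mul_self_eq_one (e := e) (by simpa using hce)
  simp only [Pi.smul_apply, smul_eq_mul] at hcx
  have hc : c * c = 1 := by linear_combination hcx - c * c * hxZ.mul_self_eq_one he
  rcases mul_self_eq_one_iff.mp hc with rfl | rfl
  exacts [.inl (one_smul _ _), .inr (neg_one_smul _ _)]

theorem IsDirCycle.neg (hx : IsDirCycle G x) : IsDirCycle G (-x) :=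
  isDirCycle_iff.mpr ⟨(isDirCycle_iff.mp hx).1.neg, (isDirCycle_iff.mp hx).2.neg⟩

theorem IsDirCocycle.neg (hx : IsDirCocycle G x) : IsDirCocycle G (-x) :=
  isDirCocycle_iff.mpr ⟨(isDirCocycle_iff.mp hx).1.neg, (isDirCocycle_iff.mp hx).2.neg⟩

theorem exists_zpm_conformal_of_mem_cocycleSpace (hw : w ∈ cocycleSpace G) (hw0 : w ≠ 0) :
    ∃ y ∈ cocycleSpace G, y ≠ 0 ∧ IsZPM G y ∧ Conformal y w := by
  obtain ⟨f, rfl⟩ := hw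
  obtain ⟨e₀, he₀⟩ := Function.support_nonempty_iff.mpr hw0
  simp only [mem_support, mulVecLin_apply, incMat_transpose_mulVec_apply, sub_ne_zero] at he₀
  -- the cut between the vertices where `f` exceeds its smaller value on `e₀` and the others
  let A : G.V → ℝ := fun v => if min (f (G.head e₀)) (f (G.tail e₀)) < f v then 1 else 0
  refine ⟨(incMat G)ᵀ *ᵥ A, ⟨A, rfl⟩, fun h => ?_, fun e => ?_, fun e he => ?_⟩
  · have := congrFun h e₀
    simp only [incMat_transpose_mulVec_apply, A, Pi.zero_apply] at this
    rcases he₀.lt_or_gt with h' | h'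
    · simp [min_eq_left h'.le, h'] at this
    · simp [min_eq_right h'.le, h'] at this
  · simp only [incMat_transpose_mulVec_apply, A]
    split_ifs <;> norm_num
  · simp only [incMat_transpose_mulVec_apply, mulVecLin_apply, A] at he ⊢
    split_ifs at he ⊢ <;> first | linarith | norm_num at he

end Graph

theorem exists_mem_periodicPts {α : Type*} [Finite α] (f : α → α) (a : α) :
    ∃ b, b ∈ periodicPts f := by
  obtain ⟨m, n, hmn, heq⟩ := Finite.exists_ne_map_eq_of_infinite fun n => f^[n] a
  wlog hlt : m < n generalizing m n
  · exact this n m hmn.symm heq.symm (hmn.lt_or_gt.resolve_left hlt)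
  refine ⟨f^[m] a, mk_mem_periodicPts (Nat.sub_pos_of_lt hlt) ?_⟩
  rw [IsPeriodicPt, IsFixedPt, ← iterate_add_apply, Nat.sub_add_cancel hlt.le]
  exact heq.symm

section Walk

variable {G : Graph} {w : G.E → ℝ}

noncomputable def signAlong (w : G.E → ℝ) (e : G.E) : ℝ := if 0 < w e then 1 else -1

noncomputable def headAlong (w : G.E → ℝ) (e : G.E) : G.V :=
  if 0 < w e then G.head e else G.tail e

noncomputable def tailAlong (w : G.E → ℝ) (e : G.E) : G.V :=
  if 0 < w e then G.tail e else G.head e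

theorem incMat_mul_signAlong (v : G.V) (e : G.E) :
    incMat G v e * signAlong w e =
      (if headAlong w e = v then 1 else 0) - (if tailAlong w e = v then 1 else 0) := by
  unfold incMat signAlong headAlong tailAlong
  split_ifs <;> ring

theorem abs_mul_signAlong (e : G.E) : |w e| * signAlong w e = w e := by
  unfold signAlong
  split_ifs with h
  · rw [abs_of_pos h, mul_one]
  · rw [abs_of_nonpos (not_lt.mp h), mul_neg_one, neg_neg]

theorem incMat_mul_eq_abs_mul (v : G.V) (e : G.E) :
    incMat G v e * w e =
      |w e| * ((if headAlong w e = v then 1 else 0) - (if tailAlong w e = v then 1 else 0)) := by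
  conv_lhs => rw [← abs_mul_signAlong (w := w) e]
  rw [mul_left_comm, incMat_mul_signAlong]

theorem exists_tailAlong_eq_headAlong (hw : w ∈ cycleSpace G) {e : G.E} (he : w e ≠ 0) :
    ∃ e', w e' ≠ 0 ∧ tailAlong w e' = headAlong w e := by
  set v := headAlong w e
  have hflow : ∑ e', |w e'| * (if headAlong w e' = v then 1 else 0) =
      ∑ e', |w e'| * (if tailAlong w e' = v then 1 else 0) := by
    rw [← sub_eq_zero, ← Finset.sum_sub_distrib]
    refine (Finset.sum_congr rfl fun e' _ => ?_).trans (mem_cycleSpace_iff.mp hw v)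
    rw [incMat_mul_eq_abs_mul, mul_sub]
  have hpos : 0 < ∑ e', |w e'| * (if tailAlong w e' = v then 1 else 0) :=
    hflow ▸ Finset.sum_pos' (fun _ _ => by positivity)
      ⟨e, Finset.mem_univ _, by simpa [v] using he⟩
  obtain ⟨e', -, he'⟩ := Finset.exists_ne_zero_of_sum_ne_zero hpos.ne'
  exact ⟨e', fun h => he' (by simp [h]), by by_contra h; exact he' (by simp [h])⟩

theorem signAlong_mul_pos {e : G.E} (he : w e ≠ 0) : 0 < signAlong w e * w e := by
  unfold signAlong
  split_ifs with h
  · linarith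
  · linarith [lt_of_le_of_ne (not_lt.mp h) he]

theorem exists_zpm_conformal_of_mem_cycleSpace (hw : w ∈ cycleSpace G) (hw0 : w ≠ 0) :
    ∃ y ∈ cycleSpace G, y ≠ 0 ∧ IsZPM G y ∧ Conformal y w := by
  classical
  obtain ⟨e₀, he₀⟩ := Function.support_nonempty_iff.mpr hw0
  choose! step hstep using fun e (he : w e ≠ 0) => exists_tailAlong_eq_headAlong hw he
  let next : G.E → G.E := fun e => if w e ≠ 0 then step e else e₀
  have hnext (e : G.E) : w (next e) ≠ 0 := by
    by_cases h : w e ≠ 0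
    · simpa [next, h] using (hstep e h).1
    · simpa [next, not_not.mp h] using he₀
  -- the periodic points of `next` form closed walks along `w`, permuted by `next`
  let P := Finset.univ.filter (· ∈ periodicPts next)
  have hP : Set.BijOn next P P := by simpa [P] using bijOn_periodicPts next
  have hPw {e : G.E} (he : e ∈ P) : w e ≠ 0 := by
    obtain ⟨e', rfl⟩ := periodicPts_subset_range (by simpa [P] using he)
    exact hnext e'
  have hlink {e : G.E} (he : e ∈ P) : tailAlong w (next e) = headAlong w e := by
    simpa [next, hPw he] using (hstep e (hPw he)).2
  obtain ⟨e₁, he₁⟩ := exists_mem_periodicPts next e₀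
  have he₁P : e₁ ∈ P := by simpa [P] using he₁
  refine ⟨fun e => if e ∈ P then signAlong w e else 0, mem_cycleSpace_iff.mpr fun v => ?_,
    fun h => ?_, fun e => ?_, fun e he => ?_⟩
  · simp only [mul_ite, mul_zero]
    rw [← Finset.sum_filter, Finset.filter_mem_eq_inter, Finset.univ_inter]
    simp only [incMat_mul_signAlong]
    rw [Finset.sum_sub_distrib, sub_eq_zero]
    exact Finset.sum_nbij next (fun e he => hP.mapsTo he) hP.injOn hP.surjOn
      fun e he => by rw [hlink he]
  · have := congrFun h e₁
    simp only [he₁P, if_true, Pi.zero_apply, signAlong] at this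
    split_ifs at this <;> norm_num at this
  · simp only [signAlong]
    split_ifs <;> norm_num
  · by_cases hPe : e ∈ P
    · simpa [hPe] using signAlong_mul_pos (hPw hPe)
    · simp [hPe] at he

end Walk

section Decomposition

variable {G : Graph} {M : Submodule ℝ (G.E → ℝ)} {w z b O₁ O₂ : G.E → ℝ}

theorem exists_zpm_isElementary_conformal
    (hround : ∀ x ∈ M, x ≠ 0 → ∃ y ∈ M, y ≠ 0 ∧ IsZPM G y ∧ Conformal y x)
    (hw : w ∈ M) (hw0 : w ≠ 0) : ∃ y, IsElementary M y ∧ IsZPM G y ∧ Conformal y w := by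
  obtain ⟨x, hx, hxw⟩ := exists_isElementary_conformal hw hw0
  obtain ⟨y, hyM, hy0, hyZ, hyx⟩ := hround x hx.1 hx.2.1
  exact ⟨y, hx.of_support_eq hyM hy0 (hx.2.2 y hyM hy0 hyx.support_subset), hyZ, hyx.trans hxw⟩

theorem exists_sum_disjoint_zpm_isElementary
    (hround : ∀ x ∈ M, x ≠ 0 → ∃ y ∈ M, y ≠ 0 ∧ IsZPM G y ∧ Conformal y x)
    (hz : z ∈ M) (hzZ : IsZPM G z) :
    ∃ (n : ℕ) (c : Fin n → G.E → ℝ),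
      (∀ i, (IsElementary M (c i) ∧ IsZPM G (c i)) ∧ IsRestriction (c i) z) ∧
      (∀ i j, i ≠ j → Disjoint (support (c i)) (support (c j))) ∧ z = ∑ i, c i :=
  exists_sum_pairwise_disjoint (P := fun y => IsElementary M y ∧ IsZPM G y)
    (fun x hx hx0 hxz => by
      obtain ⟨y, hy, hyZ, hyx⟩ := exists_zpm_isElementary_conformal hround hx hx0
      exact ⟨y, hy.1, ⟨hy, hyZ⟩, hy.2.1,
        hyZ.isRestriction_of_conformal (hzZ.of_isRestriction hxz) hyx⟩) hz

theorem isIntVec_zero : IsIntVec G 0 := fun _ => ⟨0, by simp⟩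

theorem IsIntVec.add (hz : IsIntVec G z) (hb : IsIntVec G b) : IsIntVec G (z + b) := fun e => by
  obtain ⟨m, hm⟩ := hz e
  obtain ⟨n, hn⟩ := hb e
  exact ⟨m + n, by simp [hm, hn]⟩

theorem IsIntVec.neg (hz : IsIntVec G z) : IsIntVec G (-z) := fun e => by
  obtain ⟨m, hm⟩ := hz e
  exact ⟨-m, by simp [hm]⟩

theorem SameCCClass.exists_sub_eq_add (h : SameCCClass G O₁ O₂) :
    ∃ z ∈ cycleSpace G, ∃ b ∈ cocycleSpace G,
      IsIntVec G z ∧ IsIntVec G b ∧ O₁ - O₂ = z + b := by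
  induction h with
  | rel O O' h =>
    obtain ⟨x, hx | hx, -, rfl⟩ := h
    · exact ⟨x, hx.1, 0, zero_mem _, hx.2.2.1.isIntVec, isIntVec_zero, by abel⟩
    · exact ⟨0, zero_mem _, x, hx.1, isIntVec_zero, hx.2.2.1.isIntVec, by abel⟩
  | refl O => exact ⟨0, zero_mem _, 0, zero_mem _, isIntVec_zero, isIntVec_zero, by simp⟩
  | symm O O' _ ih =>
    obtain ⟨z, hz, b, hb, hzi, hbi, h⟩ := ih
    exact ⟨-z, neg_mem hz, -b, neg_mem hb, hzi.neg, hbi.neg, by rw [← neg_sub, h, neg_add]⟩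
  | trans O O' O'' _ _ ih₁ ih₂ =>
    obtain ⟨z₁, hz₁, b₁, hb₁, hzi₁, hbi₁, h₁⟩ := ih₁
    obtain ⟨z₂, hz₂, b₂, hb₂, hzi₂, hbi₂, h₂⟩ := ih₂
    refine ⟨z₁ + z₂, add_mem hz₁ hz₂, b₁ + b₂, add_mem hb₁ hb₂, hzi₁.add hzi₂,
      hbi₁.add hbi₂, ?_⟩
    rw [← sub_add_sub_cancel, h₁, h₂]
    abel

theorem IsIntVec.mul_eq_zero_of_dotProduct_eq_zero (hz : IsIntVec G z) (hb : IsIntVec G b)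
    (hzb : z ⬝ᵥ b = 0) (hu : IsZPM G (z + b)) (e : G.E) : z e * b e = 0 := by
  have habs (t : ℝ) (ht : ∃ n : ℤ, t = n) : |t| ≤ t ^ 2 := by
    obtain ⟨n, rfl⟩ := ht
    exact_mod_cast Int.natCast_natAbs n ▸ Int.natAbs_le_self_sq n
  have hle (e : G.E) : z e * b e ≤ 0 := by
    have : (z e + b e) ^ 2 = |z e + b e| := by
      rcases hu e with h | h | h <;> simp only [Pi.add_apply] at h <;> rw [h] <;> norm_num
    nlinarith [abs_add_le (z e) (b e), habs _ (hz e), habs _ (hb e)]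
  exact (Finset.sum_eq_zero_iff_of_nonpos fun e _ => hle e).mp hzb e (Finset.mem_univ e)

end Decomposition

section Reversal

variable {G : Graph} {x y O O₁ O₂ : G.E → ℝ}

theorem IsOrientation.isZPM_sub (hO₁ : IsOrientation G O₁) (hO₂ : IsOrientation G O₂) :
    IsZPM G (O₁ - O₂) := fun e => by
  rcases hO₁ e with h₁ | h₁ <;> rcases hO₂ e with h₂ | h₂ <;> simp [h₁, h₂]

theorem IsOrientation.sub (hO : IsOrientation G O) (hx : InOrient G x O) :
    IsOrientation G (O - x) := fun e => by
  rcases hx e with h | h <;> rcases hO e with h' | h' <;> norm_num [h, h', dir]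

variable (G) in
theorem finite_setOf_isOrientation : {O : G.E → ℝ | IsOrientation G O}.Finite :=
  (Set.Finite.pi fun _ => Set.toFinite {0, 1}).subset fun _ hO e _ => hO e

theorem IsRestriction.inOrient (hO₁ : IsOrientation G O₁) (hO₂ : IsOrientation G O₂)
    (h : IsRestriction y (O₁ - O₂)) : InOrient G y O₁ := fun e =>
  (eq_or_ne (y e) 0).imp_right fun hy => by
    have hne : O₁ e ≠ O₂ e := sub_ne_zero.mp (by rwa [h e hy] at hy)
    rw [h e hy, Pi.sub_apply, dir]
    rcases hO₁ e with h₁ | h₁ <;> rcases hO₂ e with h₂ | h₂ <;> grind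

theorem exists_reversal_decomposition (hO₁ : IsOrientation G O₁) (hO₂ : IsOrientation G O₂)
    (h : SameCCClass G O₁ O₂) :
    ∃ (n m : ℕ) (c : Fin n → G.E → ℝ) (d : Fin m → G.E → ℝ),
      (∀ i, IsDirCycle G (c i) ∧ IsRestriction (c i) (O₁ - O₂)) ∧
      (∀ j, IsDirCocycle G (d j) ∧ IsRestriction (d j) (O₁ - O₂)) ∧
      (∀ i j, i ≠ j → Disjoint (support (c i)) (support (c j))) ∧
      (∀ i j, i ≠ j → Disjoint (support (d i)) (support (d j))) ∧
      (∀ i j, Disjoint (support (c i)) (support (d j))) ∧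
      O₁ - O₂ = ∑ i, c i + ∑ j, d j := by
  obtain ⟨z, hz, b, hb, hzi, hbi, hu⟩ := h.exists_sub_eq_add
  have hZ : IsZPM G (z + b) := hu ▸ hO₁.isZPM_sub hO₂
  have hzb := hzi.mul_eq_zero_of_dotProduct_eq_zero hbi
    (dotProduct_eq_zero_of_mem_cycleSpace hz hb) hZ
  have hzu : IsRestriction z (O₁ - O₂) := hu ▸ fun e he => by
    simp [(mul_eq_zero.mp (hzb e)).resolve_left he]
  have hbu : IsRestriction b (O₁ - O₂) := hu ▸ fun e he => by
    simp [(mul_eq_zero.mp (hzb e)).resolve_right he]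
  obtain ⟨n, c, hc, hcc, hcsum⟩ := exists_sum_disjoint_zpm_isElementary
    (fun _ => exists_zpm_conformal_of_mem_cycleSpace) hz (hZ.of_isRestriction (hu ▸ hzu))
  obtain ⟨m, d, hd, hdd, hdsum⟩ := exists_sum_disjoint_zpm_isElementary
    (fun _ => exists_zpm_conformal_of_mem_cocycleSpace) hb (hZ.of_isRestriction (hu ▸ hbu))
  refine ⟨n, m, c, d, fun i => ⟨isDirCycle_iff.mpr (hc i).1, (hc i).2.trans hzu⟩,
    fun j => ⟨isDirCocycle_iff.mpr (hd j).1, (hd j).2.trans hbu⟩, hcc, hdd, fun i j => ?_,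
    by rw [hu, ← hcsum, ← hdsum]⟩
  exact Set.disjoint_left.mpr fun e hce hde => (hc i).2.support_subset hce
    ((mul_eq_zero.mp (hzb e)).resolve_right ((hd j).2.support_subset hde))

theorem not_isRestriction_sub_of_compatible {σc : CycSig G} {σs : CocycSig G}
    (hO₁ : IsOrientation G O₁) (hO₂ : IsOrientation G O₂)
    (hc₁ : Compatible G σc σs O₁) (hc₂ : Compatible G σc σs O₂)
    (hy : IsDirCycle G y ∨ IsDirCocycle G y) : ¬ IsRestriction y (O₁ - O₂) := by
  intro h
  have h₁ : InOrient G y O₁ := h.inOrient hO₁ hO₂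
  have h₂ : InOrient G (-y) O₂ := (neg_sub O₁ O₂ ▸ h.neg).inOrient hO₂ hO₁
  -- both `y` and `-y` would be the signature's choice on the support of `y`
  have hyy : y = -y := by
    rcases hy with hy | hy
    · exact (hc₁.1 y hy h₁).trans (by simpa using (hc₂.1 (-y) hy.neg h₂).symm)
    · exact (hc₁.2 y hy h₁).trans (by simpa using (hc₂.2 (-y) hy.neg h₂).symm)
  have hy0 : y ≠ 0 := hy.elim (·.2.1) (·.2.1)
  exact hy0 (self_eq_neg.mp hyy)

theorem eq_of_compatible_of_sameCCClass {σc : CycSig G} {σs : CocycSig G}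
    (hO₁ : IsOrientation G O₁) (hO₂ : IsOrientation G O₂)
    (hc₁ : Compatible G σc σs O₁) (hc₂ : Compatible G σc σs O₂)
    (h : SameCCClass G O₁ O₂) : O₁ = O₂ := by
  obtain ⟨n, m, c, d, hc, hd, -, -, -, hsum⟩ := exists_reversal_decomposition hO₁ hO₂ h
  have hc0 : ∑ i, c i = 0 := Finset.sum_eq_zero fun i _ =>
    (not_isRestriction_sub_of_compatible hO₁ hO₂ hc₁ hc₂ (.inl (hc i).1) (hc i).2).elim
  have hd0 : ∑ j, d j = 0 := Finset.sum_eq_zero fun j _ =>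
    (not_isRestriction_sub_of_compatible hO₁ hO₂ hc₁ hc₂ (.inr (hd j).1) (hd j).2).elim
  rwa [hc0, hd0, add_zero, sub_eq_zero] at hsum

end Reversal

open Relation

theorem exists_reflTransGen_forall_not {α : Type*} {r : α → α → Prop} {S : Set α}
    (hS : S.Finite) (hrS : ∀ a b, r a b → b ∈ S) (hr : ∀ a, ¬ TransGen r a a) {a : α}
    (ha : a ∈ S) : ∃ b ∈ S, ReflTransGen r a b ∧ ∀ c, ¬ r b c := by
  have hTS : {b | ReflTransGen r a b} ⊆ S := fun b hb =>
    hb.cases_tail.elim (· ▸ ha) fun ⟨c, _, hcb⟩ => hrS c b hcb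
  have hsucc (b : α) : {c | TransGen r b c} ⊆ S := fun c hc =>
    (TransGen.tail'_iff.mp hc).elim fun d hd => hrS d c hd.2
  -- a reachable `b` with the fewest successors has none
  obtain ⟨b, hb, hmin⟩ := Set.exists_min_image _ (fun b => {c | TransGen r b c}.ncard)
    (hS.subset hTS) ⟨a, ReflTransGen.refl⟩
  refine ⟨b, hTS hb, hb, fun c hbc => ?_⟩
  have hlt : {d | TransGen r c d}.ncard < {d | TransGen r b d}.ncard :=
    Set.ncard_lt_ncard
      ⟨fun d hd => TransGen.head hbc hd, fun h => hr c (h (TransGen.single hbc))⟩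
      (hS.subset (hsucc b))
  exact (hmin c (ReflTransGen.tail hb hbc)).not_gt hlt

section Signature

variable {G : Graph} {σc : CycSig G} {σs : CocycSig G} {v v' O : G.E → ℝ}

open Classical in
def IsSigComb (σc : CycSig G) (σs : CocycSig G) (v : G.E → ℝ) : Prop :=
  ∃ a b : Set G.E → ℝ, (∀ C, 0 ≤ a C) ∧ (∀ C, 0 ≤ b C) ∧
    ((∃ C, IsCycle G C ∧ 0 < a C) ∨ ∃ C, IsCocycle G C ∧ 0 < b C) ∧
    v = ∑ C ∈ Finset.univ.filter (fun C => IsCycle G C), a C • σc.s C +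
      ∑ C ∈ Finset.univ.filter (fun C => IsCocycle G C), b C • σs.s C

theorem IsSigComb.add (hv : IsSigComb σc σs v) (hv' : IsSigComb σc σs v') :
    IsSigComb σc σs (v + v') := by
  obtain ⟨a, b, ha, hb, hpos, rfl⟩ := hv
  obtain ⟨a', b', ha', hb', -, rfl⟩ := hv'
  refine ⟨a + a', b + b', fun C => add_nonneg (ha C) (ha' C), fun C => add_nonneg (hb C) (hb' C),
    hpos.imp (fun ⟨C, hC, h⟩ => ⟨C, hC, by simp only [Pi.add_apply]; linarith [ha' C]⟩)
      (fun ⟨C, hC, h⟩ => ⟨C, hC, by simp only [Pi.add_apply]; linarith [hb' C]⟩), ?_⟩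
  simp only [Pi.add_apply, add_smul, Finset.sum_add_distrib]
  abel

open Classical in
theorem isSigComb_of_isCycle {C : Set G.E} (hC : IsCycle G C) : IsSigComb σc σs (σc.s C) :=
  ⟨fun D => if D = C then 1 else 0, 0, fun _ => by positivity, fun _ => le_rfl,
    .inl ⟨C, hC, by simp⟩, by simp [ite_smul, hC]⟩

open Classical in
theorem isSigComb_of_isCocycle {C : Set G.E} (hC : IsCocycle G C) : IsSigComb σc σs (σs.s C) :=
  ⟨0, fun D => if D = C then 1 else 0, fun _ => le_rfl, fun _ => by positivity,
    .inr ⟨C, hC, by simp⟩, by simp [ite_smul, hC]⟩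

open Classical in
theorem IsSigComb.ne_zero (hac : AcyclicSig G σc) (hacs : AcyclicCosig G σs)
    (hv : IsSigComb σc σs v) : v ≠ 0 := by
  obtain ⟨a, b, ha, hb, hpos, rfl⟩ := hv
  intro h0
  set v₁ := ∑ C ∈ Finset.univ.filter (fun C => IsCycle G C), a C • σc.s C
  set v₂ := ∑ C ∈ Finset.univ.filter (fun C => IsCocycle G C), b C • σs.s C
  have hv₁ : v₁ ∈ cycleSpace G := Submodule.sum_mem _ fun C hC =>
    Submodule.smul_mem _ _ (σc.mem C (Finset.mem_filter.mp hC).2).1.1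
  have hv₂ : v₂ ∈ cocycleSpace G := Submodule.sum_mem _ fun C hC =>
    Submodule.smul_mem _ _ (σs.mem C (Finset.mem_filter.mp hC).2).1.1
  have hv₁0 : v₁ = 0 := eq_zero_of_mem_cycleSpace_of_mem_cocycleSpace hv₁
    (eq_neg_of_add_eq_zero_left h0 ▸ neg_mem hv₂)
  have hv₂0 : v₂ = 0 := by rwa [hv₁0, zero_add] at h0
  rcases hpos with ⟨C, hC, hpos⟩ | ⟨C, hC, hpos⟩
  · exact hpos.ne' (hac a ha hv₁0 C hC)
  · exact hpos.ne' (hacs b hb hv₂0 C hC)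

theorem CycSig.s_support_eq_neg (σ : CycSig G) {x : G.E → ℝ} (hx : IsDirCycle G x)
    (hne : x ≠ σ.s (support x)) : σ.s (support x) = -x := by
  obtain ⟨hσ, hσx⟩ := σ.mem _ ⟨x, hx, rfl⟩
  exact ((isDirCycle_iff.mp hx).1.eq_or_eq_neg_of_support_eq hx.2.2.1 hσ.1 hσ.2.2.1
    hσx).resolve_left (Ne.symm hne)

theorem CocycSig.s_support_eq_neg (σ : CocycSig G) {x : G.E → ℝ} (hx : IsDirCocycle G x)
    (hne : x ≠ σ.s (support x)) : σ.s (support x) = -x := by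
  obtain ⟨hσ, hσx⟩ := σ.mem _ ⟨x, hx, rfl⟩
  exact ((isDirCocycle_iff.mp hx).1.eq_or_eq_neg_of_support_eq hx.2.2.1 hσ.1 hσ.2.2.1
    hσx).resolve_left (Ne.symm hne)

theorem exists_ccRev_isSigComb_of_not_compatible (hO : ¬ Compatible G σc σs O) :
    ∃ O', CCRev G O O' ∧ IsSigComb σc σs (O' - O) := by
  rcases not_and_or.mp hO with h | h
  · obtain ⟨x, hx, hxO, hne⟩ :
        ∃ x, IsDirCycle G x ∧ InOrient G x O ∧ x ≠ σc.s (support x) := by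
      simpa [SigCompatible] using h
    refine ⟨O - x, ⟨x, .inl hx, hxO, rfl⟩, ?_⟩
    rw [sub_sub_cancel_left, ← σc.s_support_eq_neg hx hne]
    exact isSigComb_of_isCycle ⟨x, hx, rfl⟩
  · obtain ⟨x, hx, hxO, hne⟩ :
        ∃ x, IsDirCocycle G x ∧ InOrient G x O ∧ x ≠ σs.s (support x) := by
      simpa [CosigCompatible] using h
    refine ⟨O - x, ⟨x, .inr hx, hxO, rfl⟩, ?_⟩
    rw [sub_sub_cancel_left, ← σs.s_support_eq_neg hx hne]
    exact isSigComb_of_isCocycle ⟨x, hx, rfl⟩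

theorem exists_compatible_sameCCClass (hac : AcyclicSig G σc) (hacs : AcyclicCosig G σs)
    (hO : IsOrientation G O) :
    ∃ Ocp, IsOrientation G Ocp ∧ Compatible G σc σs Ocp ∧ SameCCClass G O Ocp := by
  let r O₁ O₂ := IsOrientation G O₁ ∧ CCRev G O₁ O₂ ∧ IsSigComb σc σs (O₂ - O₁)
  have hrS (O₁ O₂ : G.E → ℝ) (h : r O₁ O₂) : IsOrientation G O₂ := by
    obtain ⟨hO₁, ⟨x, -, hx, rfl⟩, -⟩ := h
    exact hO₁.sub hx
  have hcomb {O₁ O₂ : G.E → ℝ} (h : TransGen r O₁ O₂) :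
      IsSigComb σc σs (O₂ - O₁) := by
    induction h with
    | single h => exact h.2.2
    | tail _ h ih => simpa using ih.add h.2.2
  obtain ⟨Ocp, hOcp, hpath, hterm⟩ := exists_reflTransGen_forall_not
    (finite_setOf_isOrientation G) hrS (fun _ h => (hcomb h).ne_zero hac hacs (sub_self _)) hO
  refine ⟨Ocp, hOcp, by_contra fun hnc => ?_,
    EqvGen.reflTransGen_le_eqvGen (CCRev G) _ _
      (ReflTransGen.mono (r := r) (fun _ _ h => h.2.1) _ _ hpath)⟩
  obtain ⟨O', h₁, h₂⟩ := exists_ccRev_isSigComb_of_not_compatible hnc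
  exact hterm O' ⟨hOcp, h₁, h₂⟩

end Signature

end GB

open GB in
theorem stmt_6_general (G : GB.Graph)
    (σc : GB.CycSig G) (σs : GB.CocycSig G)
    (hac : GB.AcyclicSig G σc) (hacs : GB.AcyclicCosig G σs)
    (O : G.E → ℝ) (hO : GB.IsOrientation G O) :
    ∃ Ocp : G.E → ℝ,
      (GB.IsOrientation G Ocp ∧ GB.Compatible G σc σs Ocp ∧ GB.SameCCClass G O Ocp ∧
        ∃ (n m : ℕ) (c : Fin n → (G.E → ℝ)) (d : Fin m → (G.E → ℝ)),
          (∀ i, GB.IsDirCycle G (c i) ∧ GB.InOrient G (c i) Ocp) ∧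
          (∀ j, GB.IsDirCocycle G (d j) ∧ GB.InOrient G (d j) Ocp) ∧
          (∀ i j, i ≠ j → Disjoint (Function.support (c i)) (Function.support (c j))) ∧
          (∀ i j, i ≠ j → Disjoint (Function.support (d i)) (Function.support (d j))) ∧
          (∀ i j, Disjoint (Function.support (c i)) (Function.support (d j))) ∧
          O = Ocp - (∑ i, c i) - (∑ j, d j)) ∧
      (∀ O' : G.E → ℝ, GB.IsOrientation G O' → GB.Compatible G σc σs O' →
        GB.SameCCClass G O O' → O' = Ocp) := by
  obtain ⟨Ocp, hOcp, hcp, hOOcp⟩ := exists_compatible_sameCCClass hac hacs hO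
  obtain ⟨n, m, c, d, hc, hd, hcc, hdd, hcd, hsum⟩ :=
    exists_reversal_decomposition hOcp hO (Relation.EqvGen.symm _ _ hOOcp)
  refine ⟨Ocp, ⟨hOcp, hcp, hOOcp, n, m, c, d,
    fun i => ⟨(hc i).1, (hc i).2.inOrient hOcp hO⟩,
    fun j => ⟨(hd j).1, (hd j).2.inOrient hOcp hO⟩, hcc, hdd, hcd, ?_⟩, ?_⟩
  · rw [sub_sub, ← hsum, sub_sub_cancel]
  · exact fun O' hO' hc' hOO' => eq_of_compatible_of_sameCCClass hO' hOcp hc' hcp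
      (Relation.EqvGen.trans _ _ _ (Relation.EqvGen.symm _ _ hOO') hOOcp)

open GB in
theorem stmt_6 (G : GB.Graph) (hconn : GB.Connected G)
    (σc : GB.CycSig G) (σs : GB.CocycSig G)
    (hac : GB.AcyclicSig G σc) (hacs : GB.AcyclicCosig G σs)
    (O : G.E → ℝ) (hO : GB.IsOrientation G O) :
    ∃ Ocp : G.E → ℝ,
      (GB.IsOrientation G Ocp ∧ GB.Compatible G σc σs Ocp ∧ GB.SameCCClass G O Ocp ∧
        ∃ (n m : ℕ) (c : Fin n → (G.E → ℝ)) (d : Fin m → (G.E → ℝ)),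
          (∀ i, GB.IsDirCycle G (c i) ∧ GB.InOrient G (c i) Ocp) ∧
          (∀ j, GB.IsDirCocycle G (d j) ∧ GB.InOrient G (d j) Ocp) ∧
          (∀ i j, i ≠ j → Disjoint (Function.support (c i)) (Function.support (c j))) ∧
          (∀ i j, i ≠ j → Disjoint (Function.support (d i)) (Function.support (d j))) ∧
          (∀ i j, Disjoint (Function.support (c i)) (Function.support (d j))) ∧
          O = Ocp - (∑ i, c i) - (∑ j, d j)) ∧
      (∀ O' : G.E → ℝ, GB.IsOrientation G O' → GB.Compatible G σc σs O' →
        GB.SameCCClass G O O' → O' = Ocp) :=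
  stmt_6_general G σc σs hac hacs O hO
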